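/- Translation equivariance of the geometric log-sum-exp and softmax: assume the kernel matrix K = (exp(−c_{ij}/2))_{i,j} is positive definite. For every f ∈ ℝ^d and every constant c ∈ ℝ, Ω_C^*(f + c·1) = Ω_C^*(f) + c and g-softmax(f + c·1) = g-softmax(f), where 1 ∈ ℝ^d is the all-ones vector. -/

import Mathlib

open Finset Real Filter

noncomputable section

/-- The probability simplex in `ℝ^d`. -/
def simplexS (d : ℕ) : Set (Fin d → ℝ) := stdSimplex ℝ (Fin d)

open scoped Classical

/-- `Φ_C(α,f) = Σ_{i,j} α_i α_j exp(-(f_i + f_j + c_{ij})/2)`. -/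
def Phi {d : ℕ} (C : Matrix (Fin d) (Fin d) ℝ) (α f : Fin d → ℝ) : ℝ :=
  ∑ i, ∑ j, α i * α j * Real.exp (-(f i + f j + C i j) / 2)

/-- The geometric log-sum-exp `Ω_C^*(f) = -log min_{α ∈ △^d} Φ_C(α, f)`. -/
def OmegaStar {d : ℕ} (C : Matrix (Fin d) (Fin d) ℝ) (f : Fin d → ℝ) : ℝ :=
  -Real.log (sInf ((fun α => Phi C α f) '' simplexS d))

/-- The geometric softmax: the (unique, when the kernel is positive definite) minimizer of
`Φ_C(·, f)` over the simplex. -/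
def gsoftmax {d : ℕ} (C : Matrix (Fin d) (Fin d) ℝ) (f : Fin d → ℝ) : Fin d → ℝ :=
  if h : ∃ α ∈ simplexS d, IsMinOn (fun β => Phi C β f) (simplexS d) α
  then h.choose else fun _ => 0

/-- The soft C-transform `T(f,α)_i = -2 log Σ_j α_j exp((f_j - c_{ij})/2)`. -/
def Tsoft {d : ℕ} (C : Matrix (Fin d) (Fin d) ℝ) (f α : Fin d → ℝ) : Fin d → ℝ :=
  fun i => -2 * Real.log (∑ j, α j * Real.exp ((f j - C i j) / 2))

/-- `f` is the symmetric Sinkhorn potential of `α`: `-f = T(-f, α)`. -/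
def IsSinkhornPotential {d : ℕ} (C : Matrix (Fin d) (Fin d) ℝ) (α f : Fin d → ℝ) : Prop :=
  -f = Tsoft C (-f) α

/-- The symmetric Sinkhorn potential `∇Ω(α)`: the (unique, when the kernel is positive
definite) `f` with `-f = T(-f, α)`. -/
def gradOmega {d : ℕ} (C : Matrix (Fin d) (Fin d) ℝ) (α : Fin d → ℝ) : Fin d → ℝ :=
  if h : ∃ f : Fin d → ℝ, IsSinkhornPotential C α f then h.choose else fun _ => 0

/-- The extrapolation `f^E = -T(-(f - Ω_C^*(f)·1), g-softmax(f)) + Ω_C^*(f)·1`. -/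
def extrap {d : ℕ} (C : Matrix (Fin d) (Fin d) ℝ) (f : Fin d → ℝ) : Fin d → ℝ :=
  fun i => -(Tsoft C (fun j => -(f j - OmegaStar C f)) (gsoftmax C f) i) + OmegaStar C f

/-- The kernel matrix `K = (exp(-c_{ij}/2))_{ij}`. -/
def kernelK {d : ℕ} (C : Matrix (Fin d) (Fin d) ℝ) : Matrix (Fin d) (Fin d) ℝ :=
  Matrix.of fun i j => Real.exp (-(C i j) / 2)

/-! Shifting `f` by `c` multiplies `Φ_C(·, f)` by `e^{-c}`. Hence the minimum over the simplex
is multiplied by `e^{-c}`, and it is positive because `Φ_C(α, f)` is the `K`-quadratic form of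
`(α_i e^{-f_i/2})_i`; so `Ω_C^*` shifts by `c`. The set of minimizers does not change at all,
so the choice defining `g-softmax` is made from the same predicate. -/

open scoped Matrix Pointwise

section Phi

variable {d : ℕ} (C : Matrix (Fin d) (Fin d) ℝ)

lemma Phi_add_const (α f : Fin d → ℝ) (c : ℝ) :
    Phi C α (fun i => f i + c) = Real.exp (-c) * Phi C α f := by
  simp only [Phi, Finset.mul_sum]
  refine Finset.sum_congr rfl fun i _ => Finset.sum_congr rfl fun j _ => ?_
  rw [show -(f i + c + (f j + c) + C i j) / 2 = -c + -(f i + f j + C i j) / 2 by ring,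
    Real.exp_add]
  ring

lemma Phi_eq_dotProduct_kernelK_mulVec (α f : Fin d → ℝ) :
    Phi C α f = (fun i => α i * Real.exp (-f i / 2)) ⬝ᵥ
      (kernelK C *ᵥ fun i => α i * Real.exp (-f i / 2)) := by
  simp only [Phi, dotProduct, Matrix.mulVec, kernelK, Matrix.of_apply, Finset.mul_sum]
  refine Finset.sum_congr rfl fun i _ => Finset.sum_congr rfl fun j _ => ?_
  rw [show -(f i + f j + C i j) / 2 = -f i / 2 + (-C i j / 2 + -f j / 2) by ring,
    Real.exp_add, Real.exp_add]
  ring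

lemma Phi_pos (hK : (kernelK C).PosDef) (f : Fin d → ℝ) {α : Fin d → ℝ} (hα : α ≠ 0) :
    0 < Phi C α f := by
  have hy : (fun i => α i * Real.exp (-f i / 2)) ≠ 0 := fun h =>
    hα <| funext fun i => by simpa [Real.exp_ne_zero] using congrFun h i
  rw [Phi_eq_dotProduct_kernelK_mulVec]
  simpa only [star_trivial] using hK.dotProduct_mulVec_pos hy

lemma continuous_Phi (f : Fin d → ℝ) : Continuous fun α => Phi C α f := by
  unfold Phi
  fun_prop

lemma sInf_Phi_image_pos (hK : (kernelK C).PosDef) (f : Fin d → ℝ) {s : Set (Fin d → ℝ)}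
    (hs : IsCompact s) (hne : s.Nonempty) (h0 : 0 ∉ s) :
    0 < sInf ((fun α => Phi C α f) '' s) := by
  obtain ⟨α, hα, hmin⟩ :=
    (hs.image (continuous_Phi C f)).sInf_mem (hne.image _)
  rw [← hmin]
  exact Phi_pos C hK f (ne_of_mem_of_not_mem hα h0)

lemma Phi_image_add_const (f : Fin d → ℝ) (c : ℝ) (s : Set (Fin d → ℝ)) :
    (fun α => Phi C α (fun i => f i + c)) '' s =
      Real.exp (-c) • (fun α => Phi C α f) '' s := by
  simp only [Phi_add_const, ← smul_eq_mul, ← Set.image_smul, Set.image_image]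

lemma isMinOn_Phi_add_const_iff (f : Fin d → ℝ) (c : ℝ) (s : Set (Fin d → ℝ))
    (α : Fin d → ℝ) :
    IsMinOn (fun β => Phi C β (fun i => f i + c)) s α ↔ IsMinOn (fun β => Phi C β f) s α := by
  simp only [isMinOn_iff, Phi_add_const, mul_le_mul_iff_right₀ (Real.exp_pos (-c))]

end Phi

lemma OmegaStar_add_const {d : ℕ} (hd : 1 ≤ d) (C : Matrix (Fin d) (Fin d) ℝ)
    (hK : (kernelK C).PosDef) (f : Fin d → ℝ) (c : ℝ) :
    OmegaStar C (fun i => f i + c) = OmegaStar C f + c := by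
  have hpos : 0 < sInf ((fun α => Phi C α f) '' simplexS d) :=
    sInf_Phi_image_pos C hK f (isCompact_stdSimplex ℝ (Fin d))
      ⟨_, single_mem_stdSimplex ℝ (⟨0, hd⟩ : Fin d)⟩ fun h => by simpa using h.2
  rw [OmegaStar, OmegaStar, Phi_image_add_const, Real.sInf_smul_of_nonneg (Real.exp_pos _).le,
    smul_eq_mul, Real.log_mul (Real.exp_ne_zero _) hpos.ne', Real.log_exp]
  ring

lemma gsoftmax_add_const {d : ℕ} (C : Matrix (Fin d) (Fin d) ℝ) (f : Fin d → ℝ) (c : ℝ) :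
    gsoftmax C (fun i => f i + c) = gsoftmax C f := by
  simp only [gsoftmax, isMinOn_Phi_add_const_iff]

theorem gLSE_gsoftmax_translation_general (d : ℕ) (hd : 1 ≤ d)
    (C : Matrix (Fin d) (Fin d) ℝ)
    (hK : (kernelK C).PosDef) (f : Fin d → ℝ) (c : ℝ) :
    OmegaStar C (fun i => f i + c) = OmegaStar C f + c ∧
    gsoftmax C (fun i => f i + c) = gsoftmax C f :=
  ⟨OmegaStar_add_const hd C hK f c, gsoftmax_add_const C f c⟩

/-- Translation equivariance of the geometric log-sum-exp and softmax:
`Ω_C^*(f + c·1) = Ω_C^*(f) + c` and `g-softmax(f + c·1) = g-softmax(f)`. -/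
theorem gLSE_gsoftmax_translation (d : ℕ) (hd : 1 ≤ d)
    (C : Matrix (Fin d) (Fin d) ℝ) (hCsym : C.IsSymm) (hCdiag : ∀ i, C i i = 0)
    (hK : (kernelK C).PosDef) (f : Fin d → ℝ) (c : ℝ) :
    OmegaStar C (fun i => f i + c) = OmegaStar C f + c ∧
    gsoftmax C (fun i => f i + c) = gsoftmax C f :=
  gLSE_gsoftmax_translation_general d hd C hK f c
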